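/- arXiv:2601.09244 — 2 statements merged into one kernel-verified Lean document; each statement's English description precedes it below -/
import Mathlib

section
/- Let s ≥ 2 be an integer and let F be a graph. Then ex(n, K_s, F) ≤ ex_s(n, Berge-F) ≤ ex(n, K_s, F) + ex(n, F). -/
open Finset

/-- A hypergraph (with vertices drawn from `ℕ`) given by its finite set of hyperedges. -/
abbrev HG : Type := Finset (Finset ℕ)

/-- The support (set of non-isolated vertices) of a hypergraph. -/
def hsupp (G : HG) : Finset ℕ := G.sup id

/-- `G` is `r`-uniform: every hyperedge has exactly `r` vertices. -/
def Uniform (r : ℕ) (G : HG) : Prop := ∀ e ∈ G, e.card = r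

/-- The image of a hypergraph under a relabelling of the vertices. -/
def emap (f : ℕ → ℕ) (G : HG) : HG := G.image (Finset.image f)

/-- `K` is an isomorphic copy of `H` (as hypergraphs; isolated vertices are irrelevant). -/
def IsCopy (H K : HG) : Prop :=
  ∃ f : ℕ → ℕ, Set.InjOn f ↑(hsupp H) ∧ emap f H = K

/-- `G` contains a subhypergraph isomorphic to `H`. -/
def Contains (G H : HG) : Prop := ∃ K, K ⊆ G ∧ IsCopy H K

/-- `N(H, G)`: the number of subhypergraphs of `G` isomorphic to `H`. -/
noncomputable def copyCount (H G : HG) : ℕ :=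
  Set.ncard {K : HG | K ⊆ G ∧ IsCopy H K}

/-- The generalized Turán number `ex_r(n, H, F)`: the maximum number of copies of `H`
in an `F`-free `r`-uniform hypergraph on `n` vertices. -/
noncomputable def exCount (r n : ℕ) (H F : HG) : ℕ :=
  sSup { m | ∃ G : HG, Uniform r G ∧ hsupp G ⊆ Finset.range n ∧
    ¬ Contains G F ∧ m = copyCount H G }

/-- The Turán number `ex_r(n, F)`: the maximum number of hyperedges in an `F`-free
`r`-uniform hypergraph on `n` vertices. -/
noncomputable def exTuran (r n : ℕ) (F : HG) : ℕ :=
  sSup { m | ∃ G : HG, Uniform r G ∧ hsupp G ⊆ Finset.range n ∧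
    ¬ Contains G F ∧ m = G.card }

/-- The complete `r`-graph `K_s^{(r)}` on `s` vertices. -/
def completeHG (r s : ℕ) : HG := Finset.powersetCard r (Finset.range s)

/-- The path `P_l` with `l` edges, as a 2-uniform hypergraph. -/
def pathG (l : ℕ) : HG := (Finset.range l).image (fun i => ({i, i+1} : Finset ℕ))

/-- The cycle `C_l` with `l` edges, as a 2-uniform hypergraph. -/
def cycleG (l : ℕ) : HG := (Finset.range l).image (fun i => ({i, (i+1) % l} : Finset ℕ))

/-- The star `S_l = K_{1,l}` with `l` edges, as a 2-uniform hypergraph. -/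
def starG (l : ℕ) : HG := (Finset.range l).image (fun i => ({0, i+1} : Finset ℕ))

/-- The `r`-expansion `F^r` of a graph `F`: insert `r - 2` new distinct vertices into each
edge of `F`, the new vertices being distinct across edges and disjoint from `V(F)`. -/
def expansion (r : ℕ) (F : HG) : HG :=
  F.image (fun e => e.image (fun v => Nat.pair 0 v) ∪
    (Finset.range (r-2)).image (fun j => Nat.pair 1 (Nat.pair (Encodable.encode e) j)))

/-- The vertex-disjoint union of the hypergraphs `H 0, …, H (k-1)`. -/
def hIUnion (k : ℕ) (H : ℕ → HG) : HG :=
  (Finset.range k).biUnion (fun i => emap (fun v => Nat.pair i v) (H i))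

/-- The vertex-disjoint union of two hypergraphs. -/
def hUnion (G H : HG) : HG := emap (fun v => 2*v) G ∪ emap (fun v => 2*v+1) H

/-- The strong chromatic number of a hypergraph (for a 2-uniform hypergraph this is
the usual chromatic number of the graph). -/
noncomputable def chromNum (G : HG) : ℕ :=
  sInf { k | ∃ c : ℕ → Fin k, ∀ e ∈ G, Set.InjOn c ↑e }

/-- The complete balanced `l`-partite `r`-graph `T_r(n, l)` on `n` vertices. -/
def turanHG (r n l : ℕ) : HG :=
  (Finset.powersetCard r (Finset.range n)).filter
    (fun e => ∀ i ∈ e, ∀ j ∈ e, i % l = j % l → i = j)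

/-- `S_{n,t}^r(n-t, l)`: take a set `U` of `t` vertices together with a disjoint copy of
`T_r(n-t, l)`, and add as hyperedges all `r`-sets meeting `U`. -/
def splitTuranHG (r n t l : ℕ) : HG :=
  (Finset.powersetCard r (Finset.range n)).filter
    (fun e => (∃ v ∈ e, v < t) ∨ ∀ i ∈ e, ∀ j ∈ e, (i - t) % l = (j - t) % l → i = j)

/-- `S_{n,t}^r`: the `n`-vertex `r`-graph of all `r`-sets meeting a fixed set of `t` vertices. -/
def starHG (r n t : ℕ) : HG :=
  (Finset.powersetCard r (Finset.range n)).filter (fun e => ∃ v ∈ e, v < t)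

/-- `F` is a member of the family `𝒦_t^r`. -/
def memFamilyK (r t : ℕ) (F : HG) : Prop :=
  Uniform r F ∧ F.card ≤ Nat.choose t 2 ∧
    ∃ S : Finset ℕ, S.card = t ∧ ∀ u ∈ S, ∀ v ∈ S, u ≠ v → ∃ e ∈ F, u ∈ e ∧ v ∈ e

/-- The maximum number of copies of `H` in an `n`-vertex `r`-graph containing no member
of the family described by the predicate `P` as a subhypergraph. -/
noncomputable def exCountFam (r n : ℕ) (H : HG) (P : HG → Prop) : ℕ :=
  sSup { m | ∃ G : HG, Uniform r G ∧ hsupp G ⊆ Finset.range n ∧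
    (∀ F : HG, P F → ¬ Contains G F) ∧ m = copyCount H G }

/-- `G` contains a Berge copy of `F`. -/
def ContainsBerge (G F : HG) : Prop :=
  ∃ f : ℕ → ℕ, Set.InjOn f ↑(hsupp F) ∧
    ∃ φ : {e : Finset ℕ // e ∈ F} → {e : Finset ℕ // e ∈ G},
      Function.Injective φ ∧ ∀ e : {e : Finset ℕ // e ∈ F}, e.1.image f ⊆ (φ e).1

/-- `ex_s(n, Berge-F)`: the maximum number of hyperedges in an `n`-vertex `s`-graph
containing no Berge copy of `F`. -/
noncomputable def exBerge (s n : ℕ) (F : HG) : ℕ :=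
  sSup { m | ∃ G : HG, Uniform s G ∧ hsupp G ⊆ Finset.range n ∧
    ¬ ContainsBerge G F ∧ m = G.card }



lemma mem_supp {G : HG} {e : Finset ℕ} (he : e ∈ G) : e ⊆ hsupp G :=
  Finset.le_sup (f := id) he

lemma hsupp_mono {G H : HG} (h : G ⊆ H) : hsupp G ⊆ hsupp H := by
  intro x hx
  simp only [hsupp, Finset.mem_sup, id] at hx ⊢
  obtain ⟨e, he, hxe⟩ := hx
  exact ⟨e, h he, hxe⟩

lemma hsupp_le {G : HG} {t : Finset ℕ} (h : ∀ e ∈ G, e ⊆ t) : hsupp G ⊆ t :=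
  Finset.sup_le h

lemma image_pair (f : ℕ → ℕ) (u v : ℕ) :
    ({u, v} : Finset ℕ).image f = {f u, f v} := by
  simp [Finset.image_insert]

lemma pair_subset {u v : ℕ} {t : Finset ℕ} (hu : u ∈ t) (hv : v ∈ t) :
    ({u, v} : Finset ℕ) ⊆ t := by
  intro x hx; simp at hx; rcases hx with rfl | rfl <;> assumption

lemma image_cancel {f : ℕ → ℕ} {t : Finset ℕ} (hf : Set.InjOn f ↑t)
    {a b : Finset ℕ} (ha : a ⊆ t) (hb : b ⊆ t) (h : a.image f = b.image f) : a = b := by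
  ext x
  constructor
  · intro hx
    have : f x ∈ b.image f := h ▸ Finset.mem_image_of_mem f hx
    obtain ⟨y, hy, hxy⟩ := Finset.mem_image.1 this
    rwa [hf (hb hy) (ha hx) hxy] at hy
  · intro hx
    have : f x ∈ a.image f := h.symm ▸ Finset.mem_image_of_mem f hx
    obtain ⟨y, hy, hxy⟩ := Finset.mem_image.1 this
    rwa [hf (ha hy) (hb hx) hxy] at hy

lemma hsupp_emap (f : ℕ → ℕ) (G : HG) : hsupp (emap f G) = (hsupp G).image f := by
  ext x
  simp only [hsupp, emap, Finset.mem_sup, Finset.mem_image, id]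
  aesop

lemma hsupp_complete {s : ℕ} (hs : 2 ≤ s) : hsupp (completeHG 2 s) = range s := by
  apply subset_antisymm
  · exact hsupp_le (fun e he => (Finset.mem_powersetCard.1 he).1)
  · intro v hv
    have hv' : v < s := mem_range.1 hv
    set u : ℕ := if v = 0 then 1 else 0 with hu_def
    have huv : u ≠ v := by
      rw [hu_def]; split <;> omega
    have hu : u < s := by rw [hu_def]; split <;> omega
    have hmem : ({u, v} : Finset ℕ) ∈ completeHG 2 s :=
      Finset.mem_powersetCard.2 ⟨pair_subset (mem_range.2 hu) hv, Finset.card_pair huv⟩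
    exact mem_supp hmem (by simp)

lemma emap_complete {f : ℕ → ℕ} {s : ℕ} (hf : Set.InjOn f ↑(range s)) :
    emap f (completeHG 2 s) = Finset.powersetCard 2 ((range s).image f) := by
  ext p
  simp only [emap, completeHG, Finset.mem_image, Finset.mem_powersetCard]
  constructor
  · rintro ⟨q, ⟨hq1, hq2⟩, rfl⟩
    refine ⟨Finset.image_subset_image hq1, ?_⟩
    rw [Finset.card_image_of_injOn (hf.mono (by exact_mod_cast hq1))]
    exact hq2
  · rintro ⟨hp1, hp2⟩
    obtain ⟨a, b, hab, rfl⟩ := Finset.card_eq_two.1 hp2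
    have hma : a ∈ (range s).image f := hp1 (Finset.mem_insert_self a {b})
    have hmb : b ∈ (range s).image f := hp1 (by simp)
    obtain ⟨u, hu, hua⟩ := Finset.mem_image.1 hma
    obtain ⟨v, hv, hvb⟩ := Finset.mem_image.1 hmb
    subst hua; subst hvb
    have huv : u ≠ v := fun h => hab (by rw [h])
    exact ⟨{u, v}, ⟨pair_subset hu hv, Finset.card_pair huv⟩, image_pair f u v⟩

lemma copy_eq {s : ℕ} (hs : 2 ≤ s) {K : HG} (h : IsCopy (completeHG 2 s) K) :
    K = Finset.powersetCard 2 (hsupp K) ∧ (hsupp K).card = s := by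
  obtain ⟨f, hf, rfl⟩ := h
  rw [hsupp_complete hs] at hf
  have hsup : hsupp (emap f (completeHG 2 s)) = (range s).image f := by
    rw [hsupp_emap, hsupp_complete hs]
  rw [hsup, emap_complete hf]
  exact ⟨rfl, by rw [Finset.card_image_of_injOn hf, card_range]⟩

lemma copy_of_card {s : ℕ} (hs : 2 ≤ s) {e : Finset ℕ} (he : e.card = s) :
    IsCopy (completeHG 2 s) (Finset.powersetCard 2 e) := by
  set g := e.orderIsoOfFin he with hg
  set f : ℕ → ℕ := fun i => if h : i < s then (g ⟨i, h⟩ : ℕ) else 0 with hf_def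
  have hinj : Set.InjOn f ↑(range s) := by
    intro i hi j hj hij
    simp only [coe_range, Set.mem_Iio] at hi hj
    rw [hf_def] at hij
    simp only [dif_pos hi, dif_pos hj] at hij
    have h2 := g.injective (Subtype.ext hij)
    exact congrArg Fin.val h2
  have himg : (range s).image f = e := by
    ext a
    simp only [Finset.mem_image, mem_range]
    constructor
    · rintro ⟨i, hi, rfl⟩
      rw [hf_def]; simp only [dif_pos hi]
      exact (g ⟨i, hi⟩).2
    · intro ha
      refine ⟨(g.symm ⟨a, ha⟩ : Fin s), (g.symm ⟨a, ha⟩).2, ?_⟩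
      rw [hf_def]; simp only [dif_pos (g.symm ⟨a, ha⟩).2]
      have : g (g.symm ⟨a, ha⟩) = ⟨a, ha⟩ := g.apply_symm_apply _
      simp [Fin.eta, this]
  refine ⟨f, ?_, ?_⟩
  · rw [hsupp_complete hs]; exact hinj
  · rw [emap_complete hinj, himg]

lemma copies_finite (H G : HG) : {K : HG | K ⊆ G ∧ IsCopy H K}.Finite := by
  apply Set.Finite.subset G.powerset.finite_toSet
  intro K hK
  simpa [Finset.mem_powerset] using hK.1

lemma copyCount_le_pow (H G : HG) : copyCount H G ≤ 2 ^ G.card := by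
  unfold copyCount
  have hsub : {K : HG | K ⊆ G ∧ IsCopy H K} ⊆ ↑G.powerset := by
    intro K hK; simpa [Finset.mem_powerset] using hK.1
  calc Set.ncard {K : HG | K ⊆ G ∧ IsCopy H K}
      ≤ Set.ncard ↑G.powerset := Set.ncard_le_ncard hsub G.powerset.finite_toSet
    _ = G.powerset.card := Set.ncard_coe_finset _
    _ = 2 ^ G.card := Finset.card_powerset G

lemma card_le_pow {n : ℕ} {G : HG} (h : hsupp G ⊆ range n) : G.card ≤ 2 ^ n := by
  have hsub : G ⊆ (range n).powerset :=
    fun e he => Finset.mem_powerset.2 ((mem_supp he).trans h)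
  calc G.card ≤ (range n).powerset.card := Finset.card_le_card hsub
    _ = 2 ^ n := by rw [Finset.card_powerset, card_range]


lemma greedy (H : HG) : ∃ (G : HG) (ψ : Finset ℕ → Finset ℕ),
    (∀ p ∈ G, p.card = 2 ∧ p ⊆ ψ p ∧ ψ p ∈ H) ∧
    Set.InjOn ψ ↑G ∧
    (∀ e ∈ H, e ∉ G.image ψ → ∀ u ∈ e, ∀ v ∈ e, u ≠ v → ({u, v} : Finset ℕ) ∈ G) := by
  classical
  induction H using Finset.induction_on with
  | empty => exact ⟨∅, id, by simp, by simp, by simp⟩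
  | @insert e H he ih =>
    obtain ⟨G, ψ, h1, h2, h3⟩ := ih
    by_cases hc : ∃ p, p ⊆ e ∧ p.card = 2 ∧ p ∉ G
    · obtain ⟨p, hpe, hp2, hpG⟩ := hc
      have hupd : ∀ q, q ∈ G → Function.update ψ p e q = ψ q := by
        intro q hqG
        exact Function.update_of_ne (by rintro rfl; exact hpG hqG) _ _
      refine ⟨insert p G, Function.update ψ p e, ?_, ?_, ?_⟩
      · intro q hq
        rcases Finset.mem_insert.1 hq with hqp | hqG
        · rw [hqp, Function.update_self]
          exact ⟨hp2, hpe, Finset.mem_insert_self _ _⟩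
        · rw [hupd q hqG]
          exact ⟨(h1 q hqG).1, (h1 q hqG).2.1, Finset.mem_insert_of_mem (h1 q hqG).2.2⟩
      · intro q hq q' hq' hqq'
        simp only [Finset.coe_insert, Set.mem_insert_iff, Finset.mem_coe] at hq hq'
        by_cases hqp : q = p <;> by_cases hq'p : q' = p
        · rw [hqp, hq'p]
        · have hq'G : q' ∈ G := hq'.resolve_left hq'p
          rw [hqp, Function.update_self, hupd q' hq'G] at hqq'
          exact absurd (show e ∈ H by rw [hqq']; exact (h1 q' hq'G).2.2) he
        · have hqG : q ∈ G := hq.resolve_left hqp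
          rw [hq'p, Function.update_self, hupd q hqG] at hqq'
          exact absurd (show e ∈ H by rw [← hqq']; exact (h1 q hqG).2.2) he
        · have hqG : q ∈ G := hq.resolve_left hqp
          have hq'G : q' ∈ G := hq'.resolve_left hq'p
          rw [hupd q hqG, hupd q' hq'G] at hqq'
          exact h2 (Finset.mem_coe.2 hqG) (Finset.mem_coe.2 hq'G) hqq'
      · intro e' he' hne u hu v hv huv
        rcases Finset.mem_insert.1 he' with rfl | he'
        · exact absurd (Finset.mem_image.2 ⟨p, Finset.mem_insert_self _ _,
            Function.update_self _ _ _⟩) hne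
        · have hni : e' ∉ G.image ψ := by
            intro hmem
            obtain ⟨q, hq, hqe⟩ := Finset.mem_image.1 hmem
            exact hne (Finset.mem_image.2 ⟨q, Finset.mem_insert_of_mem hq,
              by rw [hupd q hq]; exact hqe⟩)
          exact Finset.mem_insert_of_mem (h3 e' he' hni u hu v hv huv)
    · refine ⟨G, ψ, fun p hp => ⟨(h1 p hp).1, (h1 p hp).2.1,
        Finset.mem_insert_of_mem (h1 p hp).2.2⟩, h2, ?_⟩
      intro e' he' hne u hu v hv huv
      rcases Finset.mem_insert.1 he' with rfl | he'
      · by_contra hno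
        exact hc ⟨{u, v}, pair_subset hu hv, Finset.card_pair huv, hno⟩
      · exact h3 e' he' hne u hu v hv huv

/-- For `s ≥ 2` and a graph `F`:
`ex(n, K_s, F) ≤ ex_s(n, Berge-F) ≤ ex(n, K_s, F) + ex(n, F)`. -/
theorem stmt15 (s n : ℕ) (hs : 2 ≤ s) (F : HG) (hF : Uniform 2 F) :
    exCount 2 n (completeHG 2 s) F ≤ exBerge s n F ∧
    exBerge s n F ≤ exCount 2 n (completeHG 2 s) F + exTuran 2 n F := by
  constructor
  · -- first inequality
    apply csSup_le'
    rintro m ⟨G, hGu, hGn, hGfree, rfl⟩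
    set Q : HG := (Finset.powersetCard s (hsupp G)).filter
      (fun S => ∀ u ∈ S, ∀ v ∈ S, u ≠ v → ({u, v} : Finset ℕ) ∈ G) with hQ_def
    have hQmem : ∀ S ∈ Q, S ⊆ hsupp G ∧ S.card = s ∧
        ∀ u ∈ S, ∀ v ∈ S, u ≠ v → ({u, v} : Finset ℕ) ∈ G := by
      intro S hS
      obtain ⟨hS1, hS2⟩ := Finset.mem_filter.1 hS
      obtain ⟨hS3, hS4⟩ := Finset.mem_powersetCard.1 hS1
      exact ⟨hS3, hS4, hS2⟩
    have hQu : Uniform s Q := fun S hS => (hQmem S hS).2.1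
    have hQn : hsupp Q ⊆ Finset.range n :=
      hsupp_le (fun S hS => ((hQmem S hS).1).trans hGn)
    have hQfree : ¬ ContainsBerge Q F := by
      rintro ⟨f, hf, φ, hφinj, hφ⟩
      apply hGfree
      refine ⟨emap f F, ?_, f, hf, rfl⟩
      intro p hp
      obtain ⟨e, he, rfl⟩ := Finset.mem_image.1 hp
      obtain ⟨u, v, huv, rfl⟩ := Finset.card_eq_two.1 (hF e he)
      rw [image_pair]
      have hu : u ∈ hsupp F := mem_supp he (Finset.mem_insert_self _ _)
      have hv : v ∈ hsupp F := mem_supp he (by simp)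
      have hfuv : f u ≠ f v := fun h => huv (hf hu hv h)
      have hS := (φ ⟨{u, v}, he⟩).2
      have hsub : ({u, v} : Finset ℕ).image f ⊆ (φ ⟨{u, v}, he⟩).1 := hφ ⟨{u, v}, he⟩
      rw [image_pair] at hsub
      exact (hQmem _ hS).2.2 (f u) (hsub (Finset.mem_insert_self _ _))
        (f v) (hsub (by simp)) hfuv
    have hle : copyCount (completeHG 2 s) G ≤ Q.card := by
      have hmaps : ∀ K ∈ {K : HG | K ⊆ G ∧ IsCopy (completeHG 2 s) K},
          hsupp K ∈ Q := by
        rintro K ⟨hKG, hKc⟩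
        obtain ⟨hKeq, hKcard⟩ := copy_eq hs hKc
        refine Finset.mem_filter.2 ⟨Finset.mem_powersetCard.2 ⟨hsupp_mono hKG, hKcard⟩, ?_⟩
        intro u hu v hv huv
        have : ({u, v} : Finset ℕ) ∈ K := by
          rw [hKeq]
          exact Finset.mem_powersetCard.2 ⟨pair_subset hu hv, Finset.card_pair huv⟩
        exact hKG this
      have hinj : Set.InjOn hsupp {K : HG | K ⊆ G ∧ IsCopy (completeHG 2 s) K} := by
        rintro K ⟨_, hK⟩ K' ⟨_, hK'⟩ h
        rw [(copy_eq hs hK).1, (copy_eq hs hK').1, h]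
      calc copyCount (completeHG 2 s) G
          = (hsupp '' {K : HG | K ⊆ G ∧ IsCopy (completeHG 2 s) K}).ncard :=
            (Set.ncard_image_of_injOn hinj).symm
        _ ≤ (↑Q : Set (Finset ℕ)).ncard := Set.ncard_le_ncard
            (by rintro S ⟨K, hK, rfl⟩; exact hmaps K hK) Q.finite_toSet
        _ = Q.card := Set.ncard_coe_finset _
    have hbdd : BddAbove { m | ∃ G : HG, Uniform s G ∧ hsupp G ⊆ Finset.range n ∧
        ¬ ContainsBerge G F ∧ m = G.card } := by
      refine ⟨2 ^ n, ?_⟩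
      rintro m ⟨G', _, hG'n, _, rfl⟩
      exact card_le_pow hG'n
    exact hle.trans (le_csSup hbdd ⟨Q, hQu, hQn, hQfree, rfl⟩)
  · -- second inequality
    apply csSup_le'
    rintro m ⟨H, hHu, hHn, hHfree, rfl⟩
    obtain ⟨G, ψ, h1, h2, h3⟩ := greedy H
    have hGu : Uniform 2 G := fun p hp => (h1 p hp).1
    have hGn : hsupp G ⊆ Finset.range n :=
      hsupp_le (fun p hp => ((h1 p hp).2.1.trans (mem_supp (h1 p hp).2.2)).trans hHn)
    have hGfree : ¬ Contains G F := by
      rintro ⟨K, hKG, f, hfinj, hKeq⟩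
      apply hHfree
      refine ⟨f, hfinj, ?_⟩
      have hmemG : ∀ e ∈ F, e.image f ∈ G := by
        intro e he
        apply hKG
        rw [← hKeq]
        exact Finset.mem_image.2 ⟨e, he, rfl⟩
      refine ⟨fun e => ⟨ψ (e.1.image f), (h1 _ (hmemG e.1 e.2)).2.2⟩, ?_, ?_⟩
      · intro e e' h
        have hval : ψ (e.1.image f) = ψ (e'.1.image f) := congrArg Subtype.val h
        have himg : e.1.image f = e'.1.image f :=
          h2 (Finset.mem_coe.2 (hmemG e.1 e.2)) (Finset.mem_coe.2 (hmemG e'.1 e'.2)) hval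
        exact Subtype.ext (image_cancel hfinj (mem_supp e.2) (mem_supp e'.2) himg)
      · intro e
        exact (h1 _ (hmemG e.1 e.2)).2.1
    set I : HG := G.image ψ with hI_def
    have hIcard : I.card = G.card := Finset.card_image_of_injOn h2
    have hred : (H \ I).card ≤ copyCount (completeHG 2 s) G := by
      set ι : Finset ℕ → HG := fun e => Finset.powersetCard 2 e with hι_def
      have hmaps : ∀ e ∈ H \ I, ι e ∈ {K : HG | K ⊆ G ∧ IsCopy (completeHG 2 s) K} := by
        intro e he
        obtain ⟨heH, heI⟩ := Finset.mem_sdiff.1 he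
        constructor
        · intro q hq
          obtain ⟨hq1, hq2⟩ := Finset.mem_powersetCard.1 hq
          obtain ⟨u, v, huv, rfl⟩ := Finset.card_eq_two.1 hq2
          have hue : u ∈ e := hq1 (Finset.mem_insert_self _ _)
          have hve : v ∈ e := hq1 (Finset.mem_insert_of_mem (Finset.mem_singleton_self v))
          exact h3 e heH heI u hue v hve huv
        · exact copy_of_card hs (hHu e heH)
      have hinj : Set.InjOn ι ↑(H \ I) := by
        intro e he e' he' h
        obtain ⟨heH, _⟩ := Finset.mem_sdiff.1 (Finset.mem_coe.1 he)
        obtain ⟨heH', _⟩ := Finset.mem_sdiff.1 (Finset.mem_coe.1 he')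
        have hce : 1 < e.card := by rw [hHu e heH]; omega
        have hce' : 1 < e'.card := by rw [hHu e' heH']; omega
        ext x
        constructor
        · intro hx
          obtain ⟨y, hy, hyx⟩ := Finset.exists_mem_ne hce x
          have : ({x, y} : Finset ℕ) ∈ ι e :=
            Finset.mem_powersetCard.2 ⟨pair_subset hx hy, Finset.card_pair (Ne.symm hyx)⟩
          rw [h] at this
          exact (Finset.mem_powersetCard.1 this).1 (Finset.mem_insert_self _ _)
        · intro hx
          obtain ⟨y, hy, hyx⟩ := Finset.exists_mem_ne hce' x
          have : ({x, y} : Finset ℕ) ∈ ι e' :=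
            Finset.mem_powersetCard.2 ⟨pair_subset hx hy, Finset.card_pair (Ne.symm hyx)⟩
          rw [← h] at this
          exact (Finset.mem_powersetCard.1 this).1 (Finset.mem_insert_self _ _)
      calc (H \ I).card = (↑(H \ I) : Set (Finset ℕ)).ncard := (Set.ncard_coe_finset _).symm
        _ = (ι '' ↑(H \ I)).ncard := (Set.ncard_image_of_injOn hinj).symm
        _ ≤ copyCount (completeHG 2 s) G := Set.ncard_le_ncard
            (by rintro K ⟨e, he, rfl⟩; exact hmaps e (Finset.mem_coe.1 he))
            (copies_finite _ _)
    have hbdd1 : BddAbove { m | ∃ G : HG, Uniform 2 G ∧ hsupp G ⊆ Finset.range n ∧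
        ¬ Contains G F ∧ m = copyCount (completeHG 2 s) G } := by
      refine ⟨2 ^ 2 ^ n, ?_⟩
      rintro m ⟨G', _, hG'n, _, rfl⟩
      exact (copyCount_le_pow _ _).trans (Nat.pow_le_pow_right (by norm_num) (card_le_pow hG'n))
    have hbdd2 : BddAbove { m | ∃ G : HG, Uniform 2 G ∧ hsupp G ⊆ Finset.range n ∧
        ¬ Contains G F ∧ m = G.card } := by
      refine ⟨2 ^ n, ?_⟩
      rintro m ⟨G', _, hG'n, _, rfl⟩
      exact card_le_pow hG'n
    calc H.card ≤ (H \ I).card + I.card := Finset.card_le_card_sdiff_add_card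
      _ ≤ copyCount (completeHG 2 s) G + G.card := by
          rw [hIcard]; exact Nat.add_le_add_right hred _
      _ ≤ exCount 2 n (completeHG 2 s) F + exTuran 2 n F :=
          Nat.add_le_add
            (le_csSup hbdd1 ⟨G, hGu, hGn, hGfree, rfl⟩)
            (le_csSup hbdd2 ⟨G, hGu, hGn, hGfree, rfl⟩)
end

section
/- Let s ≥ r ≥ 3, ℓ ≥ 2 and n ≥ ℓ be integers. Let H_1 be the r-graph whose vertex set is partitioned as A ∪ B with |A| = ℓ and |B| = n − ℓ, and whose hyperedges are exactly the r-subsets of A ∪ B containing at least two vertices of A. Then H_1 is S_ℓ^r-free, N(K_s^{(r)}, H_1) = Σ_{i=0}^{r−2} C(ℓ, s−r+2+i)·C(n−ℓ, r−2−i), and consequently ex_r(n, K_s^{(r)}, S_ℓ^r) ≥ Σ_{i=0}^{r−2} C(ℓ, s−r+2+i)·C(n−ℓ, r−2−i). -/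
open Finset

/-!
The `ℓ` edges of a copy of `S_ℓ^r` pairwise meet only in the image `c` of the centre, and
each has at least two vertices in `A`, so at least one in `A \ {c}`, and two if `c ∉ A`.
These parts are pairwise disjoint, which is more than `|A| = ℓ` can accommodate.

A copy of `K_s^{(r)}` is the family of `r`-subsets of an `s`-set `S`; all of them have two
vertices in `A` exactly when `|S \ A| ≤ r - 2`. Counting the `s`-sets by `j = |S \ A|`
gives `Σ_{j ≤ r-2} C(ℓ, s - j) C(n - ℓ, j)`, the stated sum read backwards.
-/

lemma card_lt_card_of_pairwise_inter_subset_singleton {ι α : Type*} [DecidableEq α]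
    {I : Finset ι} {e : ι → Finset α} {A : Finset α} {c : α} (hI : I.Nonempty)
    (hA : ∀ i ∈ I, 2 ≤ #(e i ∩ A)) (hc : (I : Set ι).Pairwise fun i j => e i ∩ e j ⊆ {c}) :
    #I < #A := by
  set D : ι → Finset α := fun i => (e i ∩ A).erase c
  have hD : (I : Set ι).PairwiseDisjoint D := by
    refine fun i hi j hj hij => disjoint_left.mpr fun x hxi hxj => ?_
    have hx : x ∈ e i ∩ e j := mem_inter.mpr ⟨(mem_of_mem_erase hxi |> mem_inter.mp).1,
      (mem_of_mem_erase hxj |> mem_inter.mp).1⟩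
    exact ne_of_mem_erase hxi (mem_singleton.mp (hc hi hj hij hx))
  have hsum : ∑ i ∈ I, #(D i) ≤ #(A.erase c) := by
    rw [← card_biUnion hD]
    exact card_le_card (biUnion_subset.mpr fun i _ => erase_subset_erase c inter_subset_right)
  have hI1 := hI.card_pos
  by_cases hcA : c ∈ A
  · have h1 : #I • 1 ≤ ∑ i ∈ I, #(D i) := card_nsmul_le_sum _ _ _ fun i hi =>
      (Nat.sub_le_sub_right (hA i hi) 1).trans pred_card_le_card_erase
    rw [card_erase_of_mem hcA] at hsum
    have := card_pos.mpr ⟨c, hcA⟩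
    simp only [smul_eq_mul, mul_one] at h1
    omega
  · have h2 : #I • 2 ≤ ∑ i ∈ I, #(D i) := card_nsmul_le_sum _ _ _ fun i hi => by
      show 2 ≤ #((e i ∩ A).erase c)
      rw [erase_eq_of_notMem fun h => hcA (mem_inter.mp h).2]
      exact hA i hi
    rw [erase_eq_of_notMem hcA] at hsum
    simp only [smul_eq_mul] at h2
    omega

lemma forall_powersetCard_two_le_card_inter_iff {α : Type*} [DecidableEq α] {r : ℕ}
    {S A : Finset α} (hrS : r ≤ #S) :
    (∀ t ∈ powersetCard r S, 2 ≤ #(t ∩ A)) ↔ #(S \ A) + 2 ≤ r := by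
  constructor
  · intro h
    by_contra! hlt
    obtain ⟨Q, hQ, hQcard⟩ := exists_subset_card_eq (s := S \ A) (n := r - 1) (by omega)
    obtain ⟨t, hQt, htS, htcard⟩ := exists_subsuperset_card_eq
      (hQ.trans sdiff_subset) (by omega) hrS
    have h2 := h t (mem_powersetCard.mpr ⟨htS, htcard⟩)
    have hQt' : Q ⊆ t \ A := subset_sdiff.mpr ⟨hQt, disjoint_of_subset_left hQ sdiff_disjoint⟩
    have := card_le_card hQt'
    have := card_inter_add_card_sdiff t A
    omega
  · intro h t ht
    obtain ⟨htS, htcard⟩ := mem_powersetCard.mp ht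
    have := card_le_card (sdiff_subset_sdiff htS (subset_refl A))
    have := card_inter_add_card_sdiff t A
    omega

lemma powersetCard_subset_filter_two_le_card_inter_iff {α : Type*} [DecidableEq α] {r : ℕ}
    {S V A : Finset α} (hSV : S ⊆ V) (hrS : r ≤ #S) :
    powersetCard r S ⊆ {e ∈ powersetCard r V | 2 ≤ #(e ∩ A)} ↔ #(S \ A) + 2 ≤ r := by
  rw [← forall_powersetCard_two_le_card_inter_iff hrS]
  exact ⟨fun h t ht => (mem_filter.mp (h ht)).2,
    fun h t ht => mem_filter.mpr ⟨powersetCard_mono hSV ht, h t ht⟩⟩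

lemma card_filter_powersetCard_card_sdiff_eq {α : Type*} [DecidableEq α] {A B : Finset α}
    (hAB : Disjoint A B) (i j : ℕ) :
    #{S ∈ powersetCard (i + j) (A ∪ B) | #(S \ A) = j} = (#A).choose i * (#B).choose j := by
  have hsplit : ∀ X ⊆ A, ∀ Y ⊆ B, (X ∪ Y) ∩ A = X ∧ (X ∪ Y) \ A = Y := fun X hXA Y hYB =>
    ⟨by rw [union_inter_distrib_right, inter_eq_left.mpr hXA,
        disjoint_iff_inter_eq_empty.mp (hAB.symm.mono_left hYB), union_empty],
      by rw [union_sdiff_distrib, sdiff_eq_empty_iff_subset.mpr hXA, empty_union,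
        sdiff_eq_self_of_disjoint (hAB.symm.mono_left hYB)]⟩
  rw [← card_powersetCard, ← card_powersetCard, ← card_product]
  symm
  refine card_nbij' (fun P => P.1 ∪ P.2) (fun S => (S ∩ A, S \ A)) ?_ ?_ ?_ ?_
  · rintro ⟨X, Y⟩ hXY
    simp only [mem_coe, mem_product, mem_filter, mem_powersetCard] at hXY ⊢
    obtain ⟨⟨hXA, rfl⟩, hYB, rfl⟩ := hXY
    exact ⟨⟨union_subset_union hXA hYB, card_union_of_disjoint (hAB.mono hXA hYB)⟩,
      by rw [(hsplit X hXA Y hYB).2]⟩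
  · intro S hS
    simp only [mem_coe, mem_product, mem_filter, mem_powersetCard] at hS ⊢
    obtain ⟨⟨hSAB, hScard⟩, hSA⟩ := hS
    have := card_inter_add_card_sdiff S A
    exact ⟨⟨inter_subset_right, by omega⟩, ⟨sdiff_le_iff.mpr hSAB, hSA⟩⟩
  · rintro ⟨X, Y⟩ hXY
    simp only [mem_coe, mem_product, mem_powersetCard] at hXY
    obtain ⟨hX, hY⟩ := hsplit X hXY.1.1 Y hXY.2.1
    exact Prod.ext hX hY
  · intro S _
    exact sup_inf_sdiff S A

lemma card_filter_powersetCard_card_sdiff_lt {α : Type*} [DecidableEq α] {A B : Finset α}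
    (hAB : Disjoint A B) {s m : ℕ} (hm : m ≤ s + 1) :
    #{S ∈ powersetCard s (A ∪ B) | #(S \ A) < m} =
      ∑ j ∈ range m, (#A).choose (s - j) * (#B).choose j := by
  rw [card_eq_sum_card_fiberwise (f := fun S => #(S \ A)) (t := range m)
    fun S hS => mem_range.mpr (mem_filter.mp hS).2]
  refine sum_congr rfl fun j hj => ?_
  have hjs : s - j + j = s := Nat.sub_add_cancel (by simp at hj; omega)
  rw [filter_filter, ← card_filter_powersetCard_card_sdiff_eq hAB, hjs]
  congr 1
  exact filter_congr fun S _ => ⟨And.right, fun h => ⟨by simpa [h] using hj, h⟩⟩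

lemma hsupp_powersetCard {r : ℕ} {S : Finset ℕ} (hr : r ≠ 0) (hrS : r ≤ #S) :
    hsupp (powersetCard r S) = S := by
  rw [hsupp, sup_eq_biUnion, powersetCard_biUnion hr hrS]

lemma emap_powersetCard (r : ℕ) {f : ℕ → ℕ} {S : Finset ℕ} (hf : Set.InjOn f S) :
    emap f (powersetCard r S) = powersetCard r (S.image f) := by
  ext t
  simp only [emap, mem_image, mem_powersetCard]
  constructor
  · rintro ⟨e, ⟨heS, rfl⟩, rfl⟩
    exact ⟨image_subset_image heS, card_image_of_injOn (hf.mono heS)⟩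
  · rintro ⟨htS, rfl⟩
    obtain ⟨e, heS, rfl⟩ := subset_image_iff.mp htS
    exact ⟨e, ⟨heS, (card_image_of_injOn (hf.mono heS)).symm⟩, rfl⟩

lemma exists_injOn_range_image_eq (S : Finset ℕ) :
    ∃ f : ℕ → ℕ, Set.InjOn f (range #S) ∧ (range #S).image f = S := by
  let f : ℕ → ℕ := fun v => if h : v < #S then S.orderEmbOfFin rfl ⟨v, h⟩ else 0
  refine ⟨f, fun u hu v hv huv => ?_, ?_⟩
  · simp only [coe_range, Set.mem_Iio] at hu hv
    simpa [f, hu, hv] using huv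
  · ext x
    simp only [mem_image, mem_range]
    constructor
    · rintro ⟨v, hv, rfl⟩
      simp [f, hv]
    · intro hx
      obtain ⟨i, hi⟩ := (S.range_orderEmbOfFin rfl).ge hx
      exact ⟨i, i.2, by simp [f, hi]⟩

lemma isCopy_completeHG_iff {r s : ℕ} (hr : r ≠ 0) (hrs : r ≤ s) {K : HG} :
    IsCopy (completeHG r s) K ↔ ∃ S : Finset ℕ, #S = s ∧ powersetCard r S = K := by
  rw [IsCopy, completeHG, hsupp_powersetCard hr (by simpa using hrs)]
  constructor
  · rintro ⟨f, hf, rfl⟩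
    exact ⟨(range s).image f, by rw [card_image_of_injOn hf, card_range],
      (emap_powersetCard r hf).symm⟩
  · rintro ⟨S, rfl, rfl⟩
    obtain ⟨f, hf, himage⟩ := exists_injOn_range_image_eq S
    exact ⟨f, hf, by rw [emap_powersetCard r hf, himage]⟩

lemma copyCount_completeHG {r s : ℕ} (hr : r ≠ 0) (hrs : r ≤ s) {G : HG} {V : Finset ℕ}
    (hGV : hsupp G ⊆ V) :
    copyCount (completeHG r s) G = #{S ∈ powersetCard s V | powersetCard r S ⊆ G} := by
  have hcopies : {K : HG | K ⊆ G ∧ IsCopy (completeHG r s) K} =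
      ↑({S ∈ powersetCard s V | powersetCard r S ⊆ G}.image (powersetCard r)) := by
    ext K
    simp only [isCopy_completeHG_iff hr hrs, Set.mem_ofPred_eq, coe_image, coe_filter,
      mem_powersetCard, Set.mem_image]
    constructor
    · rintro ⟨hKG, S, rfl, rfl⟩
      have hSV : S ⊆ V := by
        calc S = hsupp (powersetCard r S) := (hsupp_powersetCard hr hrs).symm
          _ ⊆ hsupp G := sup_mono hKG
          _ ⊆ V := hGV
      exact ⟨S, ⟨⟨hSV, rfl⟩, hKG⟩, rfl⟩
    · rintro ⟨S, ⟨⟨-, rfl⟩, hSG⟩, rfl⟩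
      exact ⟨hSG, S, rfl, rfl⟩
  rw [copyCount, hcopies, Set.ncard_coe_finset, card_image_of_injOn]
  intro S hS S' hS' h
  simp only [coe_filter, mem_powersetCard, Set.mem_ofPred_eq] at hS hS'
  exact eq_of_powersetCard_eq (hS.1.2.trans hS'.1.2.symm) hr (hS.1.2 ▸ hrs) h

lemma copyCount_le_two_pow_card (H G : HG) : copyCount H G ≤ 2 ^ #G := by
  calc copyCount H G ≤ (G.powerset : Set HG).ncard :=
        Set.ncard_le_ncard (fun K hK => mem_powerset.mpr hK.1) (finite_toSet _)
    _ = 2 ^ #G := by rw [Set.ncard_coe_finset, card_powerset]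

lemma copyCount_le_exCount {r n : ℕ} {H F G : HG} (hG : Uniform r G) (hGn : hsupp G ⊆ range n)
    (hF : ¬ Contains G F) : copyCount H G ≤ exCount r n H F := by
  refine le_csSup ⟨2 ^ #(powersetCard r (range n)), ?_⟩ ⟨G, hG, hGn, hF, rfl⟩
  rintro m ⟨G', hG', hG'n, -, rfl⟩
  have hsub : G' ⊆ powersetCard r (range n) := fun e he =>
    mem_powersetCard.mpr ⟨(le_sup (f := id) he).trans hG'n, hG' e he⟩
  exact (copyCount_le_two_pow_card H G').trans (Nat.pow_le_pow_right two_pos (card_le_card hsub))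

def expEdge (r : ℕ) (e : Finset ℕ) : Finset ℕ :=
  e.image (fun v => Nat.pair 0 v) ∪
    (range (r - 2)).image (fun j => Nat.pair 1 (Nat.pair (Encodable.encode e) j))

lemma expansion_eq_image (r : ℕ) (F : HG) : expansion r F = F.image (expEdge r) := rfl

lemma expEdge_inter_expEdge {r : ℕ} {e e' : Finset ℕ} (h : e ≠ e') :
    expEdge r e ∩ expEdge r e' = (e ∩ e').image (fun v => Nat.pair 0 v) := by
  ext u
  simp only [expEdge, mem_inter, mem_union, mem_image, mem_range]
  constructor
  · rintro ⟨⟨v, hv, rfl⟩ | ⟨j, -, rfl⟩, ⟨v', hv', huv⟩ | ⟨j', -, huv⟩⟩ <;>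
      simp only [Nat.pair_eq_pair] at huv
    · obtain ⟨-, rfl⟩ := huv; exact ⟨v', ⟨hv, hv'⟩, rfl⟩
    · omega
    · omega
    · exact absurd (Encodable.encode_injective huv.2.1) h.symm
  · rintro ⟨v, ⟨hv, hv'⟩, rfl⟩
    exact ⟨Or.inl ⟨v, hv, rfl⟩, Or.inl ⟨v, hv', rfl⟩⟩

theorem not_contains_expansion_starG {r l : ℕ} {A : Finset ℕ} {G : HG} (hl : l ≠ 0)
    (hA : #A ≤ l) (hG : ∀ e ∈ G, 2 ≤ #(e ∩ A)) : ¬ Contains G (expansion r (starG l)) := by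
  rintro ⟨K, hKG, f, hf, rfl⟩
  set E : ℕ → Finset ℕ := fun i => expEdge r {0, i + 1}
  have hE : ∀ i ∈ range l, E i ∈ expansion r (starG l) := fun i hi => by
    rw [expansion_eq_image]
    exact mem_image_of_mem _ (mem_image_of_mem _ hi)
  have hEsupp : ∀ i ∈ range l, (E i : Set ℕ) ⊆ hsupp (expansion r (starG l)) := fun i hi =>
    coe_subset.mpr (le_sup (f := id) (hE i hi))
  refine (card_lt_card_of_pairwise_inter_subset_singleton (e := fun i => (E i).image f)
    (c := f (Nat.pair 0 0)) (nonempty_range_iff.mpr hl)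
    (fun i hi => hG _ (hKG (mem_image_of_mem _ (hE i hi)))) ?_).not_ge (by simpa using hA)
  intro i hi j hj hij
  have hne : ({0, i + 1} : Finset ℕ) ≠ {0, j + 1} := fun h => hij <| by
    have : i + 1 ∈ ({0, j + 1} : Finset ℕ) := h ▸ by simp
    simpa using this
  have hcap : ({0, i + 1} : Finset ℕ) ∩ {0, j + 1} = {0} := by
    ext v; simp only [mem_inter, mem_insert, mem_singleton]; omega
  rw [← image_inter_of_injOn _ _ (hf.mono (Set.union_subset (hEsupp i hi) (hEsupp j hj))),
    expEdge_inter_expEdge hne, hcap]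
  simp

theorem stmt18_general (r s l n : ℕ) (hr : 3 ≤ r) (hrs : r ≤ s) (hl : 2 ≤ l)
    (A B : Finset ℕ) (hAB : Disjoint A B) (hU : A ∪ B = Finset.range n)
    (hA : A.card = l) (hB : B.card = n - l)
    (H1 : HG)
    (hH1 : H1 = (Finset.powersetCard r (Finset.range n)).filter
      (fun e => 2 ≤ (e ∩ A).card)) :
    ¬ Contains H1 (expansion r (starG l)) ∧
    copyCount (completeHG r s) H1 =
      ∑ i ∈ Finset.range (r - 1), Nat.choose l (s - r + 2 + i) * Nat.choose (n - l) (r - 2 - i) ∧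
    (∑ i ∈ Finset.range (r - 1),
        Nat.choose l (s - r + 2 + i) * Nat.choose (n - l) (r - 2 - i)) ≤
      exCount r n (completeHG r s) (expansion r (starG l)) := by
  have hmem : ∀ e, e ∈ H1 ↔ (e ⊆ range n ∧ #e = r) ∧ 2 ≤ #(e ∩ A) := fun e => by
    rw [hH1, mem_filter, mem_powersetCard]
  have hsupp : hsupp H1 ⊆ range n := Finset.sup_le fun e he => ((hmem e).mp he).1.1
  have hfree := not_contains_expansion_starG (r := r) (by omega) hA.le
    fun e he => ((hmem e).mp he).2
  have hcopy : ∀ S ∈ powersetCard s (range n), powersetCard r S ⊆ H1 ↔ #(S \ A) < r - 1 :=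
    fun S hS => by
      obtain ⟨hSn, hScard⟩ := mem_powersetCard.mp hS
      rw [hH1, powersetCard_subset_filter_two_le_card_inter_iff hSn (hScard ▸ hrs)]
      omega
  have hcount : copyCount (completeHG r s) H1 =
      ∑ i ∈ range (r - 1), l.choose (s - r + 2 + i) * (n - l).choose (r - 2 - i) := by
    rw [copyCount_completeHG (by omega) hrs hsupp, filter_congr hcopy, ← hU,
      card_filter_powersetCard_card_sdiff_lt hAB (by omega), hA, hB, ← sum_range_reflect]
    refine sum_congr rfl fun i hi => ?_
    rw [mem_range] at hi
    congr 2; omega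
  exact ⟨hfree, hcount,
    hcount ▸ copyCount_le_exCount (fun e he => ((hmem e).mp he).1.2) hsupp hfree⟩

/-- The lower-bound construction for `ex_r(n, K_s^{(r)}, S_l^r)`:
the `r`-graph `H₁` on `A ∪ B` (`|A| = l`, `|B| = n - l`) whose hyperedges are the
`r`-sets with at least two vertices in `A` is `S_l^r`-free, its number of copies of
`K_s^{(r)}` equals `Σ_{i=0}^{r-2} C(l, s-r+2+i)·C(n-l, r-2-i)`, and consequently
`ex_r(n, K_s^{(r)}, S_l^r)` is at least this quantity. -/
theorem stmt18 (r s l n : ℕ) (hr : 3 ≤ r) (hrs : r ≤ s) (hl : 2 ≤ l) (hn : l ≤ n)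
    (A B : Finset ℕ) (hAB : Disjoint A B) (hU : A ∪ B = Finset.range n)
    (hA : A.card = l) (hB : B.card = n - l)
    (H1 : HG)
    (hH1 : H1 = (Finset.powersetCard r (Finset.range n)).filter
      (fun e => 2 ≤ (e ∩ A).card)) :
    ¬ Contains H1 (expansion r (starG l)) ∧
    copyCount (completeHG r s) H1 =
      ∑ i ∈ Finset.range (r - 1), Nat.choose l (s - r + 2 + i) * Nat.choose (n - l) (r - 2 - i) ∧
    (∑ i ∈ Finset.range (r - 1),
        Nat.choose l (s - r + 2 + i) * Nat.choose (n - l) (r - 2 - i)) ≤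
      exCount r n (completeHG r s) (expansion r (starG l)) :=
  stmt18_general r s l n hr hrs hl A B hAB hU hA hB H1 hH1
end
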